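/- arXiv:2009.13569 — 6 statements merged into one kernel-verified Lean document; each statement's English description precedes it below -/
import Mathlib

section
/- Let n and t be positive integers with t dividing n, and let T[l,r) be a parallel task, i.e., integers with 0 ≤ l < r ≤ n and ⌊r·t/n⌋ − ⌊l·t/n⌋ > 1. Then for every integer i with 0 ≤ i < t, the task T[l,r) covers position (i+1)·(n/t) − 1 (that is, l ≤ (i+1)·(n/t) − 1 < r) if and only if thread i executes T[l,r) (that is, ⌊l·t/n⌋ ≤ i < ⌊r·t/n⌋). -/
/-!
With `c = n / t` one has `⌊m·t/n⌋ = ⌊m/c⌋`, and `(i+1)·c − 1` is the last position of the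
`i`-th block of length `c`; so both sides of the equivalence say `l < (i+1)·c ≤ r`.
-/

namespace Nat

theorem le_succ_mul_sub_one_iff_div_le {c : ℕ} (hc : 0 < c) (l i : ℕ) :
    l ≤ (i + 1) * c - 1 ↔ l / c ≤ i := by
  have hpos : 0 < (i + 1) * c := mul_pos i.succ_pos hc
  rw [← Nat.lt_succ_iff (m := l / c), div_lt_iff_lt_mul hc, succ_eq_add_one]
  omega

theorem succ_mul_sub_one_lt_iff_lt_div {c : ℕ} (hc : 0 < c) (r i : ℕ) :
    (i + 1) * c - 1 < r ↔ i < r / c := by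
  have hpos : 0 < (i + 1) * c := mul_pos i.succ_pos hc
  rw [← succ_le_iff (m := i), le_div_iff_mul_le hc, succ_eq_add_one]
  omega

theorem mul_div_eq_div_div_of_dvd {t n : ℕ} (ht : 0 < t) (hdvd : t ∣ n) (m : ℕ) :
    m * t / n = m / (n / t) := by
  obtain ⟨c, rfl⟩ := hdvd
  rw [Nat.mul_div_cancel_left _ ht, mul_comm m t, Nat.mul_div_mul_left _ _ ht]

end Nat

theorem stmt_1_general (n t : ℕ) (hn : 0 < n) (ht : 0 < t) (hdvd : t ∣ n)
    (l r : ℕ)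
    (i : ℕ) :
    (l ≤ (i + 1) * (n / t) - 1 ∧ (i + 1) * (n / t) - 1 < r) ↔
      (l * t / n ≤ i ∧ i < r * t / n) := by
  have hc : 0 < n / t := Nat.div_pos (Nat.le_of_dvd hn hdvd) ht
  rw [Nat.mul_div_eq_div_div_of_dvd ht hdvd, Nat.mul_div_eq_div_div_of_dvd ht hdvd]
  exact and_congr (Nat.le_succ_mul_sub_one_iff_div_le hc l i)
    (Nat.succ_mul_sub_one_lt_iff_lt_div hc r i)

/-- A parallel task `T[l,r)` covers position `(i+1)·(n/t) − 1` iff thread `i`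
executes it, i.e., `⌊l·t/n⌋ ≤ i < ⌊r·t/n⌋`. -/
theorem stmt_1 (n t : ℕ) (hn : 0 < n) (ht : 0 < t) (hdvd : t ∣ n)
    (l r : ℕ) (hlr : l < r) (hrn : r ≤ n)
    (hpar : r * t / n - l * t / n > 1)
    (i : ℕ) (hi : i < t) :
    (l ≤ (i + 1) * (n / t) - 1 ∧ (i + 1) * (n / t) - 1 < r) ↔
      (l * t / n ≤ i ∧ i < r * t / n) :=
  stmt_1_general n t hn ht hdvd l r i
end

section
/- Let n and t be positive integers with t dividing n, and let T[l₁,r₁) and T[l₂,r₂) be parallel tasks (0 ≤ l₁ < r₁ ≤ n, 0 ≤ l₂ < r₂ ≤ n, ⌊r₁·t/n⌋ − ⌊l₁·t/n⌋ > 1, ⌊r₂·t/n⌋ − ⌊l₂·t/n⌋ > 1) whose index ranges are disjoint, i.e., [l₁,r₁) ∩ [l₂,r₂) = ∅. Then no thread belongs to both thread groups: there is no integer i with ⌊l₁·t/n⌋ ≤ i < ⌊r₁·t/n⌋ and ⌊l₂·t/n⌋ ≤ i < ⌊r₂·t/n⌋. Consequently, since the tasks of one recursion level are pairwise disjoint,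 each thread works on at most one parallel task per recursion level. -/
theorem Monotone.Ico_disjoint_Ico {α β : Type*} [LinearOrder α] [LinearOrder β] {f : α → β}
    (hf : Monotone f) {a₁ a₂ b₁ b₂ : α} (h : Disjoint (Set.Ico a₁ a₂) (Set.Ico b₁ b₂)) :
    Disjoint (Set.Ico (f a₁) (f a₂)) (Set.Ico (f b₁) (f b₂)) := by
  rw [Set.Ico_disjoint_Ico] at h ⊢
  rw [← hf.map_min, ← hf.map_max]
  exact hf h

theorem stmt_4_general (n t : ℕ)
    (l₁ r₁ l₂ r₂ : ℕ)
    (hdisj : Set.Ico l₁ r₁ ∩ Set.Ico l₂ r₂ = ∅) :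
    ¬ ∃ i : ℕ, (l₁ * t / n ≤ i ∧ i < r₁ * t / n) ∧
        (l₂ * t / n ≤ i ∧ i < r₂ * t / n) := by
  rintro ⟨i, hi₁, hi₂⟩
  have hmono : Monotone fun x : ℕ => x * t / n := fun _ _ hxy =>
    Nat.div_le_div_right (Nat.mul_le_mul_right t hxy)
  exact Set.disjoint_left.mp
    (hmono.Ico_disjoint_Ico (Set.disjoint_iff_inter_eq_empty.mpr hdisj)) hi₁ hi₂

/-- Two parallel tasks with disjoint index ranges have disjoint thread groups:
no thread executes both. -/
theorem stmt_4 (n t : ℕ) (hn : 0 < n) (ht : 0 < t) (hdvd : t ∣ n)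
    (l₁ r₁ l₂ r₂ : ℕ)
    (h₁ : l₁ < r₁) (h₁n : r₁ ≤ n) (hpar₁ : r₁ * t / n - l₁ * t / n > 1)
    (h₂ : l₂ < r₂) (h₂n : r₂ ≤ n) (hpar₂ : r₂ * t / n - l₂ * t / n > 1)
    (hdisj : Set.Ico l₁ r₁ ∩ Set.Ico l₂ r₂ = ∅) :
    ¬ ∃ i : ℕ, (l₁ * t / n ≤ i ∧ i < r₁ * t / n) ∧
        (l₂ * t / n ≤ i ∧ i < r₂ * t / n) :=
  stmt_4_general n t l₁ r₁ l₂ r₂ hdisj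
end

section
/- Let α and k be positive integers with k ≥ 2, and let X be a binomially distributed random variable with α·k independent trials each succeeding with probability 3/(2k). Then Pr[X < α] ≤ exp(−α/12). -/
/-! Markov's inequality for `r ^ X` with `r = 2/3` bounds `Pr[X < α]` by
`E[r ^ X] / r ^ α = (1 - 1/(2k)) ^ (αk) · (3/2) ^ α ≤ e^(-α/2) · e^(5α/12) = e^(-α/12)`. -/

open Finset Real

/-- Each lower-tail term gains a factor `r ^ (j - m) ≥ 1`; the binomial theorem then sums
all terms. -/
theorem sum_range_choose_mul_pow_le_div_pow {N m : ℕ} {p r : ℝ} (hp0 : 0 ≤ p) (hp1 : p ≤ 1)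
    (hr0 : 0 < r) (hr1 : r ≤ 1) :
    ∑ j ∈ range m, (N.choose j : ℝ) * p ^ j * (1 - p) ^ (N - j)
      ≤ (r * p + (1 - p)) ^ N / r ^ m := by
  set f : ℕ → ℝ := fun j ↦ (N.choose j : ℝ) * p ^ j * (1 - p) ^ (N - j)
  have hf : ∀ j, 0 ≤ f j := fun j ↦ by have := sub_nonneg.2 hp1; positivity
  have hterm : ∀ j ∈ range m, f j ≤ r ^ j * f j / r ^ m := fun j hj ↦ by
    rw [le_div_iff₀ (pow_pos hr0 m), mul_comm]
    exact mul_le_mul_of_nonneg_right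
      (pow_le_pow_of_le_one hr0.le hr1 (mem_range.1 hj).le) (hf j)
  have hvanish : ∀ j ∈ range (m + (N + 1)), j ∉ range (N + 1) → r ^ j * f j / r ^ m = 0 :=
    fun j _ hj ↦ by simp [f, Nat.choose_eq_zero_of_lt (by simpa using hj)]
  calc ∑ j ∈ range m, f j
      ≤ ∑ j ∈ range m, r ^ j * f j / r ^ m := sum_le_sum hterm
    _ ≤ ∑ j ∈ range (m + (N + 1)), r ^ j * f j / r ^ m :=
        sum_le_sum_of_subset_of_nonneg (range_subset_range.2 (by omega))
          fun j _ _ ↦ by have := hf j; positivity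
    _ = ∑ j ∈ range (N + 1), r ^ j * f j / r ^ m :=
        (sum_subset (range_subset_range.2 (by omega)) hvanish).symm
    _ = (r * p + (1 - p)) ^ N / r ^ m := by
        rw [← sum_div, add_pow]
        congr 1
        refine sum_congr rfl fun j _ ↦ ?_
        simp only [f]
        ring

theorem three_halves_le_exp : (3 / 2 : ℝ) ≤ exp (5 / 12) :=
  le_trans (by norm_num) (quadratic_le_exp_of_nonneg (by norm_num))

theorem stmt_7_general (α k : ℕ) (hk : 2 ≤ k) :
    ∑ j ∈ Finset.range α,
        ((α * k).choose j : ℝ) * (3 / (2 * (k : ℝ))) ^ j *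
          (1 - 3 / (2 * (k : ℝ))) ^ (α * k - j)
      ≤ Real.exp (-(α : ℝ) / 12) := by
  have hkR : (2 : ℝ) ≤ k := by exact_mod_cast hk
  set p : ℝ := 3 / (2 * (k : ℝ))
  have hp1 : p ≤ 1 := by rw [div_le_one (by positivity)]; linarith
  have hmgf : (2 / 3 * p + (1 - p)) ^ (α * k) ≤ exp (-(1 / 2)) ^ α := by
    have hbase : 2 / 3 * p + (1 - p) = 1 - 1 / 2 / k := by simp only [p]; field_simp; ring
    rw [hbase, mul_comm, pow_mul]
    gcongr
    · exact pow_nonneg (by rw [sub_nonneg, div_le_one (by positivity)]; linarith) _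
    · exact one_sub_div_pow_le_exp_neg (by linarith)
  calc _ ≤ (2 / 3 * p + (1 - p)) ^ (α * k) / (2 / 3) ^ α :=
        sum_range_choose_mul_pow_le_div_pow (by positivity) hp1 (by norm_num) (by norm_num)
    _ ≤ exp (-(1 / 2)) ^ α * exp (5 / 12) ^ α := by
        rw [div_eq_mul_inv, ← inv_pow, show (2 / 3 : ℝ)⁻¹ = 3 / 2 by norm_num]
        gcongr
        exact three_halves_le_exp
    _ = exp (-(α : ℝ) / 12) := by rw [← exp_nat_mul, ← exp_nat_mul, ← exp_add]; ring_nf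

/-- Chernoff bound: a binomial random variable with `α·k` trials and success
probability `3/(2k)` falls below `α` with probability at most `exp(−α/12)`. -/
theorem stmt_7 (α k : ℕ) (hα : 0 < α) (hk : 2 ≤ k) :
    ∑ j ∈ Finset.range α,
        ((α * k).choose j : ℝ) * (3 / (2 * (k : ℝ))) ^ j *
          (1 - 3 / (2 * (k : ℝ))) ^ (α * k - j)
      ≤ Real.exp (-(α : ℝ) / 12) :=
  stmt_7_general α k hk
end

section
/- Let k ≥ 4 be an integer, let c be a real number with c ≥ 36 − 2.38/log₂(0.34·k), let L ≥ 1 be an integer, and let p ∈ [0,1] with p ≤ 2·k^{−c/12}. Let X be a binomially distributed random variable with 2L independent trials each failing with probability p (X counts the non-successful recursion steps). Then Pr[X > L] ≤ (k/3)^{−2L}; equivalently, with probability at least 1 − (k/3)^{−2L}, at least L of the 2L recursion steps are successful. -/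
/-!
Every tail term has `p ^ j ≤ p ^ (L + 1)` and `(1 - p) ^ (2L - j) ≤ 1`, and the binomial coefficients
sum to at most `2 ^ (2L) = 4 ^ L`, so `Pr[X > L] ≤ (4p) ^ L`. The hypothesis on `c` forces `c ≥ 24`,
hence `p ≤ 2 k⁻²` and `4p ≤ (3/k)²`, which gives the bound `(k/3) ^ (-2L)`.
-/

open Finset

theorem sum_Icc_choose_mul_pow_le {p : ℝ} (hp0 : 0 ≤ p) (hp1 : p ≤ 1) (m n : ℕ) :
    ∑ j ∈ Icc m n, (n.choose j : ℝ) * p ^ j * (1 - p) ^ (n - j) ≤ 2 ^ n * p ^ m := by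
  have hterm : ∀ j ∈ Icc m n,
      (n.choose j : ℝ) * p ^ j * (1 - p) ^ (n - j) ≤ (n.choose j : ℝ) * p ^ m := by
    intro j hj
    have hpow : p ^ j ≤ p ^ m := pow_le_pow_of_le_one hp0 hp1 (mem_Icc.mp hj).1
    have hfail : (1 - p) ^ (n - j) ≤ 1 := pow_le_one₀ (by linarith) (by linarith)
    calc (n.choose j : ℝ) * p ^ j * (1 - p) ^ (n - j) ≤ (n.choose j : ℝ) * p ^ j :=
          mul_le_of_le_one_right (by positivity) hfail
      _ ≤ (n.choose j : ℝ) * p ^ m := by gcongr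
  have hchoose : ∑ j ∈ Icc m n, (n.choose j : ℝ) ≤ 2 ^ n := by
    have hsub : ∑ j ∈ Icc m n, n.choose j ≤ ∑ j ∈ range (n + 1), n.choose j :=
      sum_le_sum_of_subset fun j hj ↦ by simp only [mem_Icc, mem_range] at *; omega
    rw [Nat.sum_range_choose] at hsub
    exact_mod_cast hsub
  calc _ ≤ ∑ j ∈ Icc m n, (n.choose j : ℝ) * p ^ m := sum_le_sum hterm
    _ = (∑ j ∈ Icc m n, (n.choose j : ℝ)) * p ^ m := (sum_mul ..).symm
    _ ≤ 2 ^ n * p ^ m := by gcongr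

theorem div_logb_two_le_twelve {k : ℝ} (hk : 4 ≤ k) : 2.38 / Real.logb 2 (0.34 * k) ≤ 12 := by
  have hquarter : (1 / 4 : ℝ) ≤ Real.logb 2 (0.34 * k) := by
    rw [Real.le_logb_iff_rpow_le one_lt_two (by linarith)]
    have h : ((2 : ℝ) ^ (1 / 4 : ℝ)) ^ (4 : ℕ) ≤ 1.36 ^ (4 : ℕ) := by
      rw [← Real.rpow_natCast, ← Real.rpow_mul zero_le_two]
      norm_num
    linarith [le_of_pow_le_pow_left₀ four_ne_zero (by norm_num) h]
  rw [div_le_iff₀ (by linarith)]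
  linarith

theorem rpow_neg_div_twelve_le {k c : ℝ} (hk : 1 ≤ k) (hc : 24 ≤ c) :
    k ^ (-(c / 12)) ≤ (k ^ 2)⁻¹ := by
  calc k ^ (-(c / 12)) ≤ k ^ (-2 : ℝ) := Real.rpow_le_rpow_of_exponent_le hk (by linarith)
    _ = (k ^ 2)⁻¹ := by rw [Real.rpow_neg (by linarith), Real.rpow_two]

theorem div_rpow_neg_two_mul_natCast {a x : ℝ} (ha : 0 ≤ a) (hx : 0 ≤ x) (L : ℕ) :
    (x / a) ^ (-(2 * (L : ℝ))) = ((a / x) ^ 2) ^ L := by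
  have h : 2 * (L : ℝ) = ((2 * L : ℕ) : ℝ) := by push_cast; rfl
  rw [← inv_div, Real.inv_rpow (by positivity), Real.rpow_neg (by positivity), inv_inv, h,
    Real.rpow_natCast, pow_mul]

theorem stmt_9_general (k : ℕ) (hk : 4 ≤ k) (c : ℝ)
    (hc : 36 - 2.38 / Real.logb 2 (0.34 * k) ≤ c)
    (L : ℕ) (p : ℝ) (hp0 : 0 ≤ p) (hp1 : p ≤ 1)
    (hp : p ≤ 2 * (k : ℝ) ^ (-(c / 12))) :
    ∑ j ∈ Finset.Icc (L + 1) (2 * L),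
        ((2 * L).choose j : ℝ) * p ^ j * (1 - p) ^ (2 * L - j)
      ≤ ((k : ℝ) / 3) ^ (-(2 * (L : ℝ))) := by
  have hk4 : (4 : ℝ) ≤ k := by exact_mod_cast hk
  have hc24 : 24 ≤ c := by linarith [div_logb_two_le_twelve hk4]
  have hp4 : 4 * p ≤ (3 / k) ^ 2 := by
    have h := rpow_neg_div_twelve_le (k := k) (by linarith) hc24
    calc 4 * p ≤ 8 * ((k : ℝ) ^ 2)⁻¹ := by linarith
      _ ≤ 9 * ((k : ℝ) ^ 2)⁻¹ := by gcongr; norm_num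
      _ = (3 / k) ^ 2 := by ring
  calc _ ≤ 2 ^ (2 * L) * p ^ (L + 1) := sum_Icc_choose_mul_pow_le hp0 hp1 _ _
    _ = (4 * p) ^ L * p := by rw [pow_mul]; ring
    _ ≤ (4 * p) ^ L := mul_le_of_le_one_right (by positivity) hp1
    _ ≤ ((3 / k) ^ 2) ^ L := by gcongr
    _ = _ := (div_rpow_neg_two_mul_natCast zero_le_three (Nat.cast_nonneg k) L).symm

/-- Recursion-depth bound: failing with probability `p ≤ 2·k^{−c/12}` in each of
`2L` trials, more than `L` failures occur with probability at most `(k/3)^{−2L}`. -/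
theorem stmt_9 (k : ℕ) (hk : 4 ≤ k) (c : ℝ)
    (hc : 36 - 2.38 / Real.logb 2 (0.34 * k) ≤ c)
    (L : ℕ) (hL : 1 ≤ L) (p : ℝ) (hp0 : 0 ≤ p) (hp1 : p ≤ 1)
    (hp : p ≤ 2 * (k : ℝ) ^ (-(c / 12))) :
    ∑ j ∈ Finset.Icc (L + 1) (2 * L),
        ((2 * L).choose j : ℝ) * p ^ j * (1 - p) ^ (2 * L - j)
      ≤ ((k : ℝ) / 3) ^ (-(2 * (L : ℝ))) :=
  stmt_9_general k hk c hc L p hp0 hp1 hp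
end

section
/- Let l ≥ 1 be an integer and k = 2^l. Let α be a linearly ordered type and let s : {0, …, k−2} → α be monotone (a sorted array of k−1 splitters). Define the branchless decision tree a : {1, …, k−1} → α in left-to-right breadth-first order by a(i) = s((2·(i − 2^d) + 1)·2^{l−d−1} − 1), where d = ⌊log₂ i⌋ (so a(1) = s(k/2 − 1), a(2) = s(k/4 − 1), a(3) = s(3k/4 − 1), and in general node i has children 2i and 2i+1). For an element e ∈ α define the navigation sequence i₀ = 1 and i_{m+1} = 2·i_m + (1 if a(i_m) < e, else 0). Then for every m with 0 ≤ m ≤ l one has 2^m ≤ i_m < 2^{m+1} (so in particular every access a(i_m) with m < l is within bounds), and, setting j := i_l − k, one has 0 ≤ j ≤ k−1, s(j−1) < e whenever j ≥ 1, and e ≤ s(j) whenever j ≤ k−2. Hence the decision-tree navigation classifies e into the bucket determined by s(j−1) < e ≤ s(j), with the conventions s(−1) = −∞ and s(k−1) = +∞. -/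
/-!
The node `i = 2^m + j` reached after `m` steps is the root of the subtree whose in-order
splitters delimit the buckets `j·2^(l-m), …, (j+1)·2^(l-m) - 1`, and its own splitter is the one
at the midpoint of that range. Comparing `e` with that splitter halves the range: going right
records `s (mid - 1) < e` as the new lower bound, going left records `e ≤ s (mid - 1)` as the new
upper bound. So each bound on the final bucket is one of the comparisons made along the path, and
after `l` steps the range is the single bucket `i_l - k`.
-/

section DecisionTree

variable {α : Type*} {nav : ℕ → ℕ}

theorem pow_le_and_lt_pow_succ_of_div_two (h0 : nav 0 = 1) (hdiv : ∀ m, nav (m + 1) / 2 = nav m)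
    (m : ℕ) : 2 ^ m ≤ nav m ∧ nav m < 2 ^ (m + 1) := by
  induction m with
  | zero => simp [h0]
  | succ m ih =>
    have := hdiv m
    rw [pow_succ, pow_succ]
    omega

theorem apply_nav_of_lt {a s : ℕ → α} {l : ℕ}
    (ha : ∀ i, 1 ≤ i → i ≤ 2 ^ l - 1 →
      a i = s ((2 * (i - 2 ^ Nat.log 2 i) + 1) * 2 ^ (l - Nat.log 2 i - 1) - 1))
    {m : ℕ} (hm : m < l) (hnav : 2 ^ m ≤ nav m ∧ nav m < 2 ^ (m + 1)) :
    a (nav m) = s ((2 * (nav m - 2 ^ m) + 1) * 2 ^ (l - (m + 1)) - 1) := by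
  have hlog : Nat.log 2 (nav m) = m := Nat.log_eq_of_pow_le_of_lt_pow hnav.1 hnav.2
  have hlt : nav m < 2 ^ l := hnav.2.trans_le (Nat.pow_le_pow_right two_pos hm)
  rw [ha _ (Nat.one_le_two_pow.trans hnav.1) (by omega), hlog, Nat.sub_sub]

variable [LinearOrder α]

/-- `e` falls into one of the buckets `lo, …, hi - 1`, bucket `b` being `s (b - 1) < e ≤ s b` with
`s (-1) = -∞` and `s (k - 1) = +∞`. The bound `s (b - 1)` is written as `s i` with `i + 1 = b`, so
that it is vacuous for `b = 0` rather than the junk value `s (0 - 1) = s 0`. -/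
def BucketRange (s : ℕ → α) (k : ℕ) (e : α) (lo hi : ℕ) : Prop :=
  (∀ i, i + 1 = lo → s i < e) ∧ (∀ i, i + 1 = hi → i + 1 < k → e ≤ s i)

namespace BucketRange

variable {s : ℕ → α} {k : ℕ} {e : α} {lo hi i : ℕ}

theorem zero_self (s : ℕ → α) (k : ℕ) (e : α) : BucketRange s k e 0 k :=
  ⟨fun _ h => absurd h (Nat.succ_ne_zero _), fun _ h hk => absurd hk (by omega)⟩

theorem of_lt (h : BucketRange s k e lo hi) (hlt : s i < e) : BucketRange s k e (i + 1) hi :=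
  ⟨fun _ hj => Nat.succ_injective hj ▸ hlt, h.2⟩

theorem of_le (h : BucketRange s k e lo hi) (hle : e ≤ s i) : BucketRange s k e lo (i + 1) :=
  ⟨h.1, fun _ hj _ => Nat.succ_injective hj ▸ hle⟩

end BucketRange

variable {a s : ℕ → α} {e : α} {l : ℕ}

theorem nav_succ_div_two
    (hnavS : ∀ m, nav (m + 1) = 2 * nav m + (if a (nav m) < e then 1 else 0)) (m : ℕ) :
    nav (m + 1) / 2 = nav m := by
  rw [hnavS]
  split_ifs <;> omega

theorem bucketRange_nav
    (ha : ∀ i, 1 ≤ i → i ≤ 2 ^ l - 1 →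
      a i = s ((2 * (i - 2 ^ Nat.log 2 i) + 1) * 2 ^ (l - Nat.log 2 i - 1) - 1))
    (hnav0 : nav 0 = 1)
    (hnavS : ∀ m, nav (m + 1) = 2 * nav m + (if a (nav m) < e then 1 else 0))
    {m : ℕ} (hm : m ≤ l) :
    BucketRange s (2 ^ l) e ((nav m - 2 ^ m) * 2 ^ (l - m)) ((nav m - 2 ^ m + 1) * 2 ^ (l - m)) := by
  induction m with
  | zero => simpa [hnav0] using BucketRange.zero_self s (2 ^ l) e
  | succ m ih =>
    have hnav := pow_le_and_lt_pow_succ_of_div_two hnav0 (nav_succ_div_two hnavS) m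
    have hsplit := apply_nav_of_lt ha hm hnav
    set j := nav m - 2 ^ m
    set h := l - (m + 1)
    have hmid : (2 * j + 1) * 2 ^ h - 1 + 1 = (2 * j + 1) * 2 ^ h :=
      Nat.sub_add_cancel (Nat.one_le_iff_ne_zero.mpr (by positivity))
    have ih' := ih (by omega)
    rw [show l - m = h + 1 by omega, pow_succ] at ih'
    rw [hnavS, pow_succ]
    by_cases hb : a (nav m) < e
    · rw [if_pos hb, show 2 * nav m + 1 - 2 ^ m * 2 = 2 * j + 1 by omega]
      have := ih'.of_lt (hsplit ▸ hb)
      rwa [hmid, show (j + 1) * (2 ^ h * 2) = (2 * j + 1 + 1) * 2 ^ h by ring] at this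
    · rw [if_neg hb, show 2 * nav m + 0 - 2 ^ m * 2 = 2 * j by omega]
      have := ih'.of_le (le_of_not_gt (hsplit ▸ hb))
      rwa [hmid, show j * (2 ^ h * 2) = 2 * j * 2 ^ h by ring] at this

end DecisionTree

theorem stmt_10_general {α : Type*} [LinearOrder α]
    (l : ℕ) (hl : 1 ≤ l) (k : ℕ) (hk : k = 2 ^ l)
    (s : ℕ → α)
    (a : ℕ → α)
    (ha : ∀ i, 1 ≤ i → i ≤ k - 1 →
      a i = s ((2 * (i - 2 ^ Nat.log 2 i) + 1) * 2 ^ (l - Nat.log 2 i - 1) - 1))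
    (e : α) (nav : ℕ → ℕ)
    (hnav0 : nav 0 = 1)
    (hnavS : ∀ m, nav (m + 1) = 2 * nav m + (if a (nav m) < e then 1 else 0)) :
    (∀ m, m ≤ l → 2 ^ m ≤ nav m ∧ nav m < 2 ^ (m + 1)) ∧
    nav l - k ≤ k - 1 ∧
    (1 ≤ nav l - k → s (nav l - k - 1) < e) ∧
    (nav l - k ≤ k - 2 → e ≤ s (nav l - k)) := by
  subst hk
  have hnav := pow_le_and_lt_pow_succ_of_div_two hnav0 (nav_succ_div_two hnavS)
  obtain ⟨hlower, hupper⟩ := bucketRange_nav ha hnav0 hnavS le_rfl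
  simp only [Nat.sub_self, pow_zero, mul_one] at hlower hupper
  have hk : 2 ≤ 2 ^ l := Nat.le_self_pow (by omega) 2
  have hnavl := (hnav l).2
  rw [pow_succ] at hnavl
  exact ⟨fun m _ => hnav m, by omega, fun hj => hlower _ (by omega),
    fun hj => hupper _ rfl (by omega)⟩

/-- Correctness of branchless decision-tree navigation: the navigation indices
satisfy `2^m ≤ i_m < 2^{m+1}`, and the final bucket `j = i_l − k` satisfies
`0 ≤ j ≤ k−1`, `s(j−1) < e` (if `j ≥ 1`) and `e ≤ s(j)` (if `j ≤ k−2`). -/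
theorem stmt_10 {α : Type*} [LinearOrder α]
    (l : ℕ) (hl : 1 ≤ l) (k : ℕ) (hk : k = 2 ^ l)
    (s : ℕ → α) (hs : ∀ i j, i ≤ j → j ≤ k - 2 → s i ≤ s j)
    (a : ℕ → α)
    (ha : ∀ i, 1 ≤ i → i ≤ k - 1 →
      a i = s ((2 * (i - 2 ^ Nat.log 2 i) + 1) * 2 ^ (l - Nat.log 2 i - 1) - 1))
    (e : α) (nav : ℕ → ℕ)
    (hnav0 : nav 0 = 1)
    (hnavS : ∀ m, nav (m + 1) = 2 * nav m + (if a (nav m) < e then 1 else 0)) :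
    (∀ m, m ≤ l → 2 ^ m ≤ nav m ∧ nav m < 2 ^ (m + 1)) ∧
    nav l - k ≤ k - 1 ∧
    (1 ≤ nav l - k → s (nav l - k - 1) < e) ∧
    (nav l - k ≤ k - 2 → e ≤ s (nav l - k)) :=
  stmt_10_general l hl k hk s a ha e nav hnav0 hnavS
end

section
/- Let l ≥ 3 be an integer, k = 2^l, let n₀ be a positive real number, and let n′ be a real number with k·n₀ < n′ < k²·n₀. Define k′ := 2^{⌈(log₂(n′/n₀)+1)/2⌉}. Then √k < k′, n′ ≤ k′²·n₀, and n₀ < n′/k′ ≤ k′·n₀. In particular, partitioning into k′ buckets keeps the number of buckets at least √k while producing buckets whose expected size again lies in the adaptive regime (n₀, k′·n₀], so that one further adaptive partitioning step yields expected base case sizes between 0.5·n₀ and n₀. -/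
/-! With `r = n'/n₀` and `c = ⌈(log₂ r + 1)/2⌉`, the bucket count `k' = 2^c` satisfies
`k' < r < k'²`: the upper bound because `2c > log₂ r`, the lower one because rounding up adds
less than one and `log₂ r > l ≥ 3`. All four claims are rearrangements of these two inequalities,
the first via `k = 2^l < r < k'²`. -/

namespace Real

variable {b r : ℝ}

theorem lt_sq_zpow_ceil_logb_add_one_div_two (hb : 1 < b) (hr : 0 < r) :
    r < (b ^ ⌈(logb b r + 1) / 2⌉) ^ 2 := by
  have hc : logb b r < 2 * (⌈(logb b r + 1) / 2⌉ : ℝ) := by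
    linarith [Int.le_ceil ((logb b r + 1) / 2)]
  rw [← zpow_natCast, ← zpow_mul, ← rpow_intCast]
  push_cast
  rwa [mul_comm, ← logb_lt_iff_lt_rpow hb hr]

theorem zpow_ceil_logb_add_one_div_two_lt (hb : 1 < b) (hr : b ^ 3 < r) :
    b ^ ⌈(logb b r + 1) / 2⌉ < r := by
  have hr₀ : 0 < r := lt_trans (by positivity) hr
  have h3 : 3 < logb b r := by
    rw [lt_logb_iff_rpow_lt hb hr₀]
    exact_mod_cast hr
  rw [← rpow_intCast, ← lt_logb_iff_rpow_lt hb hr₀]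
  linarith [Int.ceil_lt_add_one ((logb b r + 1) / 2)]

end Real

theorem stmt_12_general (l : ℕ) (hl : 3 ≤ l) (n₀ n' : ℝ) (h₀ : 0 < n₀)
    (h₁ : (2 : ℝ) ^ l * n₀ < n') :
    Real.sqrt ((2 : ℝ) ^ l) < (2 : ℝ) ^ ⌈(Real.logb 2 (n' / n₀) + 1) / 2⌉ ∧
    n' ≤ ((2 : ℝ) ^ ⌈(Real.logb 2 (n' / n₀) + 1) / 2⌉) ^ 2 * n₀ ∧
    n₀ < n' / (2 : ℝ) ^ ⌈(Real.logb 2 (n' / n₀) + 1) / 2⌉ ∧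
    n' / (2 : ℝ) ^ ⌈(Real.logb 2 (n' / n₀) + 1) / 2⌉ ≤
      (2 : ℝ) ^ ⌈(Real.logb 2 (n' / n₀) + 1) / 2⌉ * n₀ := by
  have hk : (2 : ℝ) ^ l < n' / n₀ := (lt_div_iff₀ h₀).mpr h₁
  have hk₃ : (2 : ℝ) ^ 3 < n' / n₀ :=
    lt_of_le_of_lt (pow_le_pow_right₀ one_le_two hl) hk
  set k' := (2 : ℝ) ^ ⌈(Real.logb 2 (n' / n₀) + 1) / 2⌉
  have hk'₀ : 0 < k' := by positivity
  have h_upper : n' / n₀ < k' ^ 2 :=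
    Real.lt_sq_zpow_ceil_logb_add_one_div_two one_lt_two (lt_trans (by positivity) hk)
  have h_lower : k' < n' / n₀ := Real.zpow_ceil_logb_add_one_div_two_lt one_lt_two hk₃
  refine ⟨(Real.sqrt_lt' hk'₀).mpr (hk.trans h_upper), ?_, ?_, ?_⟩
  · exact ((div_lt_iff₀ h₀).mp h_upper).le
  · rw [lt_div_iff₀ hk'₀, mul_comm]
    exact (lt_div_iff₀ h₀).mp h_lower
  · rw [div_le_iff₀ hk'₀]
    exact ((div_lt_iff₀ h₀).mp h_upper).le.trans_eq (by ring)

/-- Adaptive bucket count `k′ = 2^{⌈(log₂(n′/n₀)+1)/2⌉}` for tasks with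
`k·n₀ < n′ < k²·n₀` (where `k = 2^l`, `l ≥ 3`): then `√k < k′`, `n′ ≤ k′²·n₀`,
and `n₀ < n′/k′ ≤ k′·n₀`. -/
theorem stmt_12 (l : ℕ) (hl : 3 ≤ l) (n₀ n' : ℝ) (h₀ : 0 < n₀)
    (h₁ : (2 : ℝ) ^ l * n₀ < n') (h₂ : n' < ((2 : ℝ) ^ l) ^ 2 * n₀) :
    Real.sqrt ((2 : ℝ) ^ l) < (2 : ℝ) ^ ⌈(Real.logb 2 (n' / n₀) + 1) / 2⌉ ∧
    n' ≤ ((2 : ℝ) ^ ⌈(Real.logb 2 (n' / n₀) + 1) / 2⌉) ^ 2 * n₀ ∧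
    n₀ < n' / (2 : ℝ) ^ ⌈(Real.logb 2 (n' / n₀) + 1) / 2⌉ ∧
    n' / (2 : ℝ) ^ ⌈(Real.logb 2 (n' / n₀) + 1) / 2⌉ ≤
      (2 : ℝ) ^ ⌈(Real.logb 2 (n' / n₀) + 1) / 2⌉ * n₀ :=
  stmt_12_general l hl n₀ n' h₀ h₁
end
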